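/- arXiv:1401.7088 — 3 statements merged into one kernel-verified Lean document; each statement's English description precedes it below -/
import Mathlib

section
/- Let ζ be Gamma-distributed with shape κ > 0 and scale Θ > 0, let r have density 2r/R² on [0,R], independent of ζ, and let γ = P·r^(−β)·ζ for constants P > 0 and β > 0. Then the density of γ is f_γ(x) = (2 (PΘ)^{2/β} / (β Γ(κ) x^{1+2/β} R²)) · Γ_l(κ + 2/β, R^β x/(PΘ)), where Γ_l is the lower incomplete Gamma function. -/
/-!
The substitution `t = c r^β` with `c = x / (PΘ)` maps `(0, R)` onto `(0, R^β x / (PΘ))`, and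
under it the integrand of the density becomes a constant multiple of
`t^(κ + 2/β - 1) e^(-t) dt`: the Jacobian `c β r^(β-1)` together with `t^(2/β) = c^(2/β) r²`
accounts for the factor `r^β · r` coming from `r^β / P` and the density `2r/R²` of `r`.
-/

open Real

/-- Lower incomplete gamma function `Γ_l(a, b) = ∫₀^b t^(a-1) e^(-t) dt`. -/
noncomputable def lowerIncGamma (a b : ℝ) : ℝ := ∫ t in (0 : ℝ)..b, t ^ (a - 1) * Real.exp (-t)

open Set MeasureTheory

theorem strictMonoOn_const_mul_rpow {c p : ℝ} (hc : 0 < c) (hp : 0 < p) :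
    StrictMonoOn (fun r : ℝ => c * r ^ p) (Ici 0) := fun _ ha _ hb hab =>
  mul_lt_mul_of_pos_left (strictMonoOn_rpow_Ici_of_exponent_pos hp ha hb hab) hc

theorem intervalIntegral.integral_comp_const_mul_rpow {E : Type*} [NormedAddCommGroup E]
    [NormedSpace ℝ E] (g : ℝ → E) {c p R : ℝ} (hc : 0 < c) (hp : 0 < p) (hR : 0 ≤ R) :
    ∫ r in (0 : ℝ)..R, (c * p * r ^ (p - 1)) • g (c * r ^ p) = ∫ t in (0 : ℝ)..c * R ^ p, g t := by
  have hmono : StrictMonoOn (fun r : ℝ => c * r ^ p) (Icc 0 R) :=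
    (strictMonoOn_const_mul_rpow hc hp).mono Icc_subset_Ici_self
  have himage : (fun r : ℝ => c * r ^ p) '' Ioo 0 R = Ioo 0 (c * R ^ p) := by
    have hcont : ContinuousOn (fun r : ℝ => c * r ^ p) (Icc 0 R) :=
      (continuousOn_id.rpow_const fun _ _ => Or.inr hp.le).const_smul c
    simpa [zero_rpow hp.ne'] using hcont.image_Ioo_of_strictMonoOn hR hmono
  have hderiv : ∀ r ∈ Ioo (0 : ℝ) R,
      HasDerivWithinAt (fun r : ℝ => c * r ^ p) (c * (p * r ^ (p - 1))) (Ioo 0 R) r :=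
    fun r hr => ((hasDerivAt_rpow_const (Or.inl hr.1.ne')).const_mul c).hasDerivWithinAt
  have hsubst := integral_image_eq_integral_abs_deriv_smul measurableSet_Ioo hderiv
    (hmono.injOn.mono Ioo_subset_Icc_self) g
  rw [himage] at hsubst
  rw [intervalIntegral.integral_of_le hR, intervalIntegral.integral_of_le (by positivity),
    integral_Ioc_eq_integral_Ioo, integral_Ioc_eq_integral_Ioo, hsubst]
  refine setIntegral_congr_fun measurableSet_Ioo fun r hr => ?_
  rw [abs_of_pos (by have := hr.1; positivity), mul_assoc]

theorem density_integrand_eq_lowerIncGamma_substitution {κ Θ P β R x r : ℝ} (hΘ : 0 < Θ)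
    (hP : 0 < P) (hβ : 0 < β) (hx : 0 < x) (hr : 0 < r) :
    (r ^ β / P) * ((x * r ^ β / P) ^ (κ - 1) * exp (-(x * r ^ β / P) / Θ) /
        (Gamma κ * Θ ^ κ)) * (2 * r / R ^ 2) =
      2 * (P * Θ) ^ (2 / β) / (β * Gamma κ * x ^ (1 + 2 / β) * R ^ 2) *
        ((x / (P * Θ) * β * r ^ (β - 1)) *
          ((x / (P * Θ) * r ^ β) ^ (κ + 2 / β - 1) * exp (-(x / (P * Θ) * r ^ β)))) := by
  set u := x / (P * Θ) * r ^ β with hu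
  have hu0 : 0 < u := by positivity
  have hΘu : x * r ^ β / P = Θ * u := by rw [hu]; field_simp
  have hu2 : u ^ (2 / β) = x ^ (2 / β) / (P * Θ) ^ (2 / β) * r ^ 2 := by
    rw [hu, mul_rpow (by positivity) (by positivity), div_rpow hx.le (by positivity),
      ← rpow_mul hr.le, mul_div_cancel₀ _ hβ.ne', rpow_two]
  rw [hΘu, mul_rpow hΘ.le hu0.le, neg_div, mul_div_cancel_left₀ _ hΘ.ne',
    show κ + 2 / β - 1 = (κ - 1) + 2 / β by ring, rpow_add hu0, hu2, rpow_sub hΘ, rpow_one,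
    rpow_sub hr, rpow_one, rpow_add hx, rpow_one]
  field_simp

theorem stmt_1_general (κ Θ P β R : ℝ) (hΘ : 0 < Θ) (hP : 0 < P) (hβ : 0 < β)
    (hR : 0 < R) (x : ℝ) (hx : 0 < x) :
    (∫ r in (0 : ℝ)..R,
        (r ^ β / P) *
          ((x * r ^ β / P) ^ (κ - 1) * Real.exp (-(x * r ^ β / P) / Θ) /
            (Real.Gamma κ * Θ ^ κ)) * (2 * r / R ^ 2)) =
      2 * (P * Θ) ^ (2 / β) / (β * Real.Gamma κ * x ^ (1 + 2 / β) * R ^ 2) *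
        lowerIncGamma (κ + 2 / β) (R ^ β * x / (P * Θ)) := by
  have hc : 0 < x / (P * Θ) := by positivity
  rw [lowerIncGamma, show R ^ β * x / (P * Θ) = x / (P * Θ) * R ^ β by ring,
    ← intervalIntegral.integral_comp_const_mul_rpow _ hc hβ hR.le,
    ← intervalIntegral.integral_const_mul]
  refine intervalIntegral.integral_congr_ae (Filter.Eventually.of_forall fun r hr => ?_)
  rw [uIoc_of_le hR.le] at hr
  exact density_integrand_eq_lowerIncGamma_substitution hΘ hP hβ hx hr.1

/-- If `ζ ~ Gamma(κ, Θ)` and `r` has density `2r/R²` on `[0,R]`, independent of `ζ`,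
then `γ = P r^(-β) ζ` has density
`f_γ(x) = (2 (PΘ)^{2/β} / (β Γ(κ) x^{1+2/β} R²)) Γ_l(κ + 2/β, R^β x/(PΘ))`,
where the density of `γ` is computed as
`f_γ(x) = ∫₀^R (r^β/P) f_ζ(x r^β/P) (2r/R²) dr`. -/
theorem stmt_1 (κ Θ P β R : ℝ) (hκ : 0 < κ) (hΘ : 0 < Θ) (hP : 0 < P) (hβ : 0 < β)
    (hR : 0 < R) (x : ℝ) (hx : 0 < x) :
    (∫ r in (0 : ℝ)..R,
        (r ^ β / P) *
          ((x * r ^ β / P) ^ (κ - 1) * Real.exp (-(x * r ^ β / P) / Θ) /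
            (Real.Gamma κ * Θ ^ κ)) * (2 * r / R ^ 2)) =
      2 * (P * Θ) ^ (2 / β) / (β * Real.Gamma κ * x ^ (1 + 2 / β) * R ^ 2) *
        lowerIncGamma (κ + 2 / β) (R ^ β * x / (P * Θ)) :=
  stmt_1_general κ Θ P β R hΘ hP hβ hR x hx
end

section
/- Let γ have the density f_γ(x) = (2 (PΘ)^{2/β}/(β Γ(κ) x^{1+2/β} R²)) Γ_l(κ+2/β, R^β x/(PΘ)) for x > 0. Then its cumulative distribution function is F_γ(x) = Γ_l(κ, R^β x/(PΘ))/Γ(κ) − ((ΘP/x)^{2/β}/(Γ(κ) R²)) Γ_l(κ+2/β, R^β x/(PΘ)). -/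
open MeasureTheory Set Filter Topology

theorem intervalIntegrable_rpow_mul_exp_neg {a : ℝ} (ha : 0 < a) {b : ℝ} (hb : 0 ≤ b) :
    IntervalIntegrable (fun t => t ^ (a - 1) * Real.exp (-t)) volume 0 b := by
  rw [intervalIntegrable_iff_integrableOn_Ioc_of_le hb]
  exact ((Real.GammaIntegral_convergent ha).mono_set Ioc_subset_Ioi_self).congr_fun
    (fun t _ => mul_comm _ _) measurableSet_Ioc

theorem lowerIncGamma_zero_right (a : ℝ) : lowerIncGamma a 0 = 0 :=
  intervalIntegral.integral_same

theorem lowerIncGamma_nonneg (a : ℝ) {b : ℝ} (hb : 0 ≤ b) : 0 ≤ lowerIncGamma a b :=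
  intervalIntegral.integral_nonneg hb fun t ht => by
    have := Real.rpow_nonneg ht.1 (a - 1)
    positivity

theorem lowerIncGamma_le_rpow_div {a : ℝ} (ha : 0 < a) {b : ℝ} (hb : 0 ≤ b) :
    lowerIncGamma a b ≤ b ^ a / a := by
  have hle : lowerIncGamma a b ≤ ∫ t in (0 : ℝ)..b, t ^ (a - 1) :=
    intervalIntegral.integral_mono_on hb (intervalIntegrable_rpow_mul_exp_neg ha hb)
      (intervalIntegral.intervalIntegrable_rpow' (by linarith)) fun t ht =>
        mul_le_of_le_one_right (Real.rpow_nonneg ht.1 _)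
          (Real.exp_le_one_iff.2 (neg_nonpos.2 ht.1))
  rwa [integral_rpow (Or.inl (by linarith)), sub_add_cancel, Real.zero_rpow ha.ne',
    sub_zero] at hle

theorem hasDerivAt_lowerIncGamma {a : ℝ} (ha : 0 < a) {b : ℝ} (hb : 0 < b) :
    HasDerivAt (lowerIncGamma a) (b ^ (a - 1) * Real.exp (-b)) b := by
  have hmeas : Measurable fun t : ℝ => t ^ (a - 1) * Real.exp (-t) := by fun_prop
  exact intervalIntegral.integral_hasDerivAt_right (intervalIntegrable_rpow_mul_exp_neg ha hb.le)
    hmeas.stronglyMeasurable.stronglyMeasurableAtFilter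
    ((Real.continuousAt_rpow_const b _ (Or.inl hb.ne')).mul
      (Real.continuous_exp.comp continuous_neg).continuousAt)

theorem rpow_neg_mul_lowerIncGamma_le {κ s : ℝ} (hκ : 0 < κ) (hs : 0 ≤ s) {v : ℝ}
    (hv : 0 < v) : v ^ (-s) * lowerIncGamma (κ + s) v ≤ v ^ κ / (κ + s) := by
  calc v ^ (-s) * lowerIncGamma (κ + s) v ≤ v ^ (-s) * (v ^ (κ + s) / (κ + s)) :=
        mul_le_mul_of_nonneg_left (lowerIncGamma_le_rpow_div (by linarith) hv.le)
          (Real.rpow_nonneg hv.le _)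
    _ = v ^ κ / (κ + s) := by
        rw [mul_div_assoc', ← Real.rpow_add hv, neg_add_cancel_comm_assoc]

theorem tendsto_rpow_neg_mul_lowerIncGamma {κ s : ℝ} (hκ : 0 < κ) (hs : 0 ≤ s) :
    Tendsto (fun v => v ^ (-s) * lowerIncGamma (κ + s) v) (𝓝[>] 0) (𝓝 0) := by
  have hbound : Tendsto (fun v : ℝ => v ^ κ / (κ + s)) (𝓝[>] 0) (𝓝 0) := by
    have := ((Real.continuousAt_rpow_const 0 κ (Or.inr hκ.le)).tendsto.div_const
      (κ + s)).mono_left (nhdsWithin_le_nhds (s := Ioi 0))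
    rwa [Real.zero_rpow hκ.ne', zero_div] at this
  refine squeeze_zero' ?_ ?_ hbound
  · filter_upwards [self_mem_nhdsWithin] with v (hv : 0 < v)
    exact mul_nonneg (Real.rpow_nonneg hv.le _) (lowerIncGamma_nonneg _ hv.le)
  · filter_upwards [self_mem_nhdsWithin] with v (hv : 0 < v)
    exact rpow_neg_mul_lowerIncGamma_le hκ hs hv

theorem hasDerivAt_lowerIncGamma_sub_rpow_neg_mul {κ s : ℝ} (hκ : 0 < κ) (hs : 0 ≤ s) {v : ℝ}
    (hv : 0 < v) :
    HasDerivAt (fun v => lowerIncGamma κ v - v ^ (-s) * lowerIncGamma (κ + s) v)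
      (s * v ^ (-(1 + s)) * lowerIncGamma (κ + s) v) v := by
  have hpow : HasDerivAt (fun v : ℝ => v ^ (-s)) (-s * v ^ (-s - 1)) v :=
    Real.hasDerivAt_rpow_const (Or.inl hv.ne')
  refine ((hasDerivAt_lowerIncGamma hκ hv).sub
    (hpow.mul (hasDerivAt_lowerIncGamma (by linarith) hv))).congr_deriv ?_
  have hcancel : v ^ (-s) * v ^ (κ + s - 1) = v ^ (κ - 1) := by
    rw [← Real.rpow_add hv]; ring_nf
  rw [show -s - 1 = -(1 + s) by ring, ← mul_assoc, hcancel]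
  ring

theorem integral_rpow_mul_lowerIncGamma {κ s : ℝ} (hκ : 0 < κ) (hs : 0 ≤ s) {y : ℝ}
    (hy : 0 ≤ y) :
    ∫ v in (0 : ℝ)..y, s * v ^ (-(1 + s)) * lowerIncGamma (κ + s) v =
      lowerIncGamma κ y - y ^ (-s) * lowerIncGamma (κ + s) y := by
  set G := fun v => lowerIncGamma κ v - v ^ (-s) * lowerIncGamma (κ + s) v
  have hG0 : G 0 = 0 := by simp [G, lowerIncGamma_zero_right]
  have hderiv : ∀ v ∈ Ioo 0 y, HasDerivAt G (s * v ^ (-(1 + s)) * lowerIncGamma (κ + s) v) v :=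
    fun v hv => hasDerivAt_lowerIncGamma_sub_rpow_neg_mul hκ hs hv.1
  have hcont : ContinuousOn G (Icc 0 y) := by
    intro v hv
    rcases hv.1.eq_or_lt with rfl | hv0
    · refine (continuousWithinAt_Ioi_iff_Ici.1 ?_).mono Icc_subset_Ici_self
      rw [ContinuousWithinAt, hG0]
      simpa using (tendsto_rpow_neg_mul_lowerIncGamma hκ le_rfl).sub
        (tendsto_rpow_neg_mul_lowerIncGamma hκ hs)
    · exact (hasDerivAt_lowerIncGamma_sub_rpow_neg_mul hκ hs hv0).continuousAt.continuousWithinAt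
  have hint : IntervalIntegrable (fun v => s * v ^ (-(1 + s)) * lowerIncGamma (κ + s) v)
      volume 0 y :=
    (intervalIntegrable_iff_integrableOn_Ioc_of_le hy).2 <|
      intervalIntegral.integrableOn_deriv_of_nonneg hcont hderiv fun v hv => by
        have := Real.rpow_nonneg hv.1.le (-(1 + s))
        have := lowerIncGamma_nonneg (κ + s) hv.1.le
        positivity
  rw [intervalIntegral.integral_eq_sub_of_hasDerivAt_of_le hy hcont hderiv hint, hG0, sub_zero]

theorem integral_rpow_mul_lowerIncGamma_mul {κ s c : ℝ} (hκ : 0 < κ) (hs : 0 ≤ s) (hc : 0 < c)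
    {x : ℝ} (hx : 0 ≤ x) :
    ∫ u in (0 : ℝ)..x, s * u ^ (-(1 + s)) * lowerIncGamma (κ + s) (c * u) =
      c ^ s * (lowerIncGamma κ (c * x) - (c * x) ^ (-s) * lowerIncGamma (κ + s) (c * x)) := by
  have hscale : ∀ u ∈ uIcc 0 x, s * u ^ (-(1 + s)) * lowerIncGamma (κ + s) (c * u) =
      c ^ (1 + s) * (s * (c * u) ^ (-(1 + s)) * lowerIncGamma (κ + s) (c * u)) := by
    intro u hu
    rw [uIcc_of_le hx] at hu
    rw [Real.mul_rpow hc.le hu.1, Real.rpow_neg hc.le]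
    field_simp
  rw [intervalIntegral.integral_congr hscale, intervalIntegral.integral_const_mul,
    intervalIntegral.integral_comp_mul_left (fun v => s * v ^ (-(1 + s)) * lowerIncGamma (κ + s) v)
      hc.ne', mul_zero, smul_eq_mul, integral_rpow_mul_lowerIncGamma hκ hs (by positivity),
    ← mul_assoc, Real.rpow_add hc, Real.rpow_one]
  field_simp

/-- If `γ` has density
`f_γ(x) = (2 (PΘ)^{2/β}/(β Γ(κ) x^{1+2/β} R²)) Γ_l(κ+2/β, R^β x/(PΘ))` for `x > 0`, then its CDF
is `F_γ(x) = Γ_l(κ, R^β x/(PΘ))/Γ(κ) − ((ΘP/x)^{2/β}/(Γ(κ) R²)) Γ_l(κ+2/β, R^β x/(PΘ))`. -/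
theorem stmt_3 (κ Θ P β R : ℝ) (hκ : 0 < κ) (hΘ : 0 < Θ) (hP : 0 < P) (hβ : 0 < β)
    (hR : 0 < R) (x : ℝ) (hx : 0 < x) :
    (∫ u in (0 : ℝ)..x,
        2 * (P * Θ) ^ (2 / β) / (β * Real.Gamma κ * u ^ (1 + 2 / β) * R ^ 2) *
          lowerIncGamma (κ + 2 / β) (R ^ β * u / (P * Θ))) =
      lowerIncGamma κ (R ^ β * x / (P * Θ)) / Real.Gamma κ -
        (Θ * P / x) ^ (2 / β) / (Real.Gamma κ * R ^ 2) *
          lowerIncGamma (κ + 2 / β) (R ^ β * x / (P * Θ)) := by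
  set s := 2 / β with hs_def
  simp only [mul_div_right_comm (R ^ β)]
  have hc : 0 < R ^ β / (P * Θ) := by positivity
  have hcs : (R ^ β / (P * Θ)) ^ s = R ^ 2 / (P * Θ) ^ s := by
    rw [Real.div_rpow (by positivity) (by positivity), ← Real.rpow_mul hR.le, hs_def,
      mul_div_cancel₀ _ hβ.ne', Real.rpow_two]
  generalize R ^ β / (P * Θ) = c at hc hcs ⊢
  have hdensity : ∀ u ∈ uIcc 0 x,
      2 * (P * Θ) ^ s / (β * Real.Gamma κ * u ^ (1 + s) * R ^ 2) * lowerIncGamma (κ + s) (c * u) =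
        (Real.Gamma κ)⁻¹ * (c ^ s)⁻¹ * (s * u ^ (-(1 + s)) * lowerIncGamma (κ + s) (c * u)) := by
    intro u hu
    rw [uIcc_of_le hx.le] at hu
    rw [Real.rpow_neg hu.1, hcs, inv_div, hs_def]
    ring
  rw [intervalIntegral.integral_congr hdensity, intervalIntegral.integral_const_mul,
    integral_rpow_mul_lowerIncGamma_mul hκ (by positivity) hc hx.le,
    Real.rpow_neg (by positivity), Real.mul_rpow hc.le hx.le,
    Real.div_rpow (by positivity) hx.le, mul_comm Θ P, hcs]
  have hΓ := Real.Gamma_pos_of_pos hκ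
  field_simp
end

section
/- Let S and I be independent nonnegative random variables with Laplace transforms M_S(t) = E[e^{−tS}] and M_I(t) = E[e^{−tI}], and let σ² > 0. Then E[ln(1 + S/(I + σ²))] = ∫₀^∞ (M_I(t)(1 − M_S(t))/t) e^{−σ² t} dt, provided the expectation is finite. -/
/-!
Frullani's integral `log (b / a) = ∫₀^∞ (e^{-at} - e^{-bt}) / t dt`, with `a = I + σ²` and
`b = S + I + σ²`, writes `log (1 + S / (I + σ²))` as an integral of a nonnegative function, so
Tonelli moves the expectation inside, where independence gives
`E[e^{-t(S+I)}] = M_S(t) M_I(t)`. The identity thus holds between lower Lebesgue integrals in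
`[0, ∞]`, and both Bochner integrals are their real parts. The Laplace transform `M_X(t)` is
`mgf X μ (-t)`.
-/

open MeasureTheory ProbabilityTheory Set Real

lemma integral_Ioc_exp_neg_mul {a b t : ℝ} (hab : a ≤ b) (ht : t ≠ 0) :
    ∫ s in Ioc a b, exp (-s * t) = (exp (-a * t) - exp (-b * t)) / t := by
  rw [← intervalIntegral.integral_of_le hab]
  have h := intervalIntegral.integral_comp_mul_left (fun x => exp x) (neg_ne_zero.2 ht)
    (a := a) (b := b)
  simp_rw [neg_mul_comm _ t, mul_comm _ (-t)]
  rw [h, integral_exp, smul_eq_mul, inv_neg]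
  ring

lemma lintegral_Ioi_exp_neg_mul {s : ℝ} (hs : 0 < s) :
    ∫⁻ t in Ioi 0, ENNReal.ofReal (exp (-s * t)) = ENNReal.ofReal s⁻¹ := by
  rw [← ofReal_integral_eq_lintegral_ofReal (exp_neg_integrableOn_Ioi 0 hs)
    (ae_of_all _ fun t => (exp_pos _).le), integral_exp_mul_Ioi (neg_lt_zero.2 hs)]
  simp

theorem lintegral_frullani_exp {a b : ℝ} (ha : 0 < a) (hab : a ≤ b) :
    ∫⁻ t in Ioi 0, ENNReal.ofReal ((exp (-a * t) - exp (-b * t)) / t) =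
      ENNReal.ofReal (log (b / a)) := by
  calc _ = ∫⁻ t in Ioi 0, ∫⁻ s in Ioc a b, ENNReal.ofReal (exp (-s * t)) := by
        refine setLIntegral_congr_fun measurableSet_Ioi fun t ht => ?_
        rw [← integral_Ioc_exp_neg_mul hab (ne_of_gt ht), ofReal_integral_eq_lintegral_ofReal
          (Continuous.integrableOn_Ioc (by fun_prop)) (ae_of_all _ fun s => (exp_pos _).le)]
    _ = ∫⁻ s in Ioc a b, ∫⁻ t in Ioi 0, ENNReal.ofReal (exp (-s * t)) :=
        lintegral_lintegral_swap (by fun_prop)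
    _ = ∫⁻ s in Ioc a b, ENNReal.ofReal s⁻¹ :=
        setLIntegral_congr_fun measurableSet_Ioc fun s hs =>
          lintegral_Ioi_exp_neg_mul (ha.trans hs.1)
    _ = ENNReal.ofReal (log (b / a)) := by
        rw [← ofReal_integral_eq_lintegral_ofReal, ← intervalIntegral.integral_of_le hab,
          integral_inv_of_pos ha (ha.trans_le hab)]
        · refine (intervalIntegrable_iff_integrableOn_Ioc_of_le hab).1
            (intervalIntegral.intervalIntegrable_inv (fun x hx => ?_) continuousOn_id)
          rw [uIcc_of_le hab] at hx
          exact (ha.trans_le hx.1).ne'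
        · exact (ae_restrict_iff' measurableSet_Ioc).2 (ae_of_all _ fun s hs =>
            inv_nonneg.2 (ha.trans hs.1).le)

namespace ProbabilityTheory

variable {Ω : Type*} [MeasurableSpace Ω] {μ : Measure Ω}

lemma integrable_exp_mul_of_nonpos_of_nonneg [IsFiniteMeasure μ] {X : Ω → ℝ} {t : ℝ}
    (ht : t ≤ 0) (hX : AEMeasurable X μ) (hX0 : 0 ≤ᵐ[μ] X) :
    Integrable (fun ω => exp (t * X ω)) μ :=
  .of_mem_Icc 0 1 (measurable_exp.comp_aemeasurable (hX.const_mul t)) <| by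
    filter_upwards [hX0] with ω hω
    exact ⟨(exp_pos _).le, exp_le_one_iff.2 (mul_nonpos_of_nonpos_of_nonneg ht hω)⟩

lemma mgf_le_one_of_nonpos_of_nonneg [IsProbabilityMeasure μ] {X : Ω → ℝ} {t : ℝ} (ht : t ≤ 0)
    (hX0 : 0 ≤ᵐ[μ] X) : mgf X μ t ≤ 1 := by
  simpa using mgf_anti_of_nonpos hX0 ht (by simp)

lemma measurable_mgf [SFinite μ] {X : Ω → ℝ} (hX : Measurable X) : Measurable (mgf X μ) :=
  (StronglyMeasurable.integral_prod_right' (f := fun p : ℝ × Ω => exp (p.1 * X p.2))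
    (by fun_prop : Measurable _).stronglyMeasurable).measurable

lemma IndepFun.integral_exp_mul_add_const_sub {S I : Ω → ℝ} (hSI : IndepFun S I μ) {t : ℝ}
    (hS : Integrable (fun ω => exp (t * S ω)) μ) (hI : Integrable (fun ω => exp (t * I ω)) μ)
    (c : ℝ) :
    ∫ ω, (exp (t * (I ω + c)) - exp (t * (S ω + I ω + c))) ∂μ =
      mgf I μ t * (1 - mgf S μ t) * exp (t * c) := by
  have hSI_int := hSI.integrable_exp_mul_add hS hI
  simp only [Pi.add_apply] at hSI_int
  simp_rw [mul_add t _ c, exp_add]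
  rw [integral_sub (hI.mul_const _) (hSI_int.mul_const _), integral_mul_const,
    integral_mul_const]
  have hmgf_add := hSI.mgf_add hS.aestronglyMeasurable hI.aestronglyMeasurable
  simp only [mgf, Pi.add_apply] at hmgf_add ⊢
  rw [hmgf_add]
  ring

theorem lintegral_log_one_add_div_eq_lintegral_mgf [IsProbabilityMeasure μ] {S I : Ω → ℝ}
    {σ2 : ℝ} (hσ : 0 < σ2) (hS0 : ∀ ω, 0 ≤ S ω) (hI0 : ∀ ω, 0 ≤ I ω) (hS : Measurable S)
    (hI : Measurable I) (hSI : IndepFun S I μ) :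
    ∫⁻ ω, ENNReal.ofReal (log (1 + S ω / (I ω + σ2))) ∂μ =
      ∫⁻ t in Ioi 0,
        ENNReal.ofReal (mgf I μ (-t) * (1 - mgf S μ (-t)) / t * exp (-(σ2 * t))) := by
  set g : ℝ → Ω → ℝ := fun t ω => (exp (-(I ω + σ2) * t) - exp (-(S ω + I ω + σ2) * t)) / t
  have hfrullani : ∀ ω, ENNReal.ofReal (log (1 + S ω / (I ω + σ2))) =
      ∫⁻ t in Ioi 0, ENNReal.ofReal (g t ω) := by
    intro ω
    have hIσ : 0 < I ω + σ2 := by linarith [hI0 ω]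
    rw [lintegral_frullani_exp hIσ (by linarith [hS0 ω])]
    congr 2
    field_simp
    ring
  have hinner : ∀ t ∈ Ioi (0 : ℝ), ∫⁻ ω, ENNReal.ofReal (g t ω) ∂μ =
      ENNReal.ofReal (mgf I μ (-t) * (1 - mgf S μ (-t)) / t * exp (-(σ2 * t))) := by
    intro t ht
    have hg : g t = fun ω => (exp (-t * (I ω + σ2)) - exp (-t * (S ω + I ω + σ2))) / t := by
      ext ω; simp only [g]; ring_nf
    have hint : ∀ X : Ω → ℝ, Measurable X → (∀ ω, 0 ≤ X ω) →
        Integrable (fun ω => exp (-t * X ω)) μ := fun X hX hX0 =>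
      integrable_exp_mul_of_nonpos_of_nonneg (neg_nonpos.2 (le_of_lt ht)) hX.aemeasurable
        (ae_of_all _ hX0)
    have hg0 : 0 ≤ g t := fun ω => div_nonneg
      (sub_nonneg.2 (exp_le_exp.2 (by nlinarith [hS0 ω, mem_Ioi.1 ht]))) (le_of_lt ht)
    rw [← ofReal_integral_eq_lintegral_ofReal _ (ae_of_all _ hg0), hg, integral_div,
      hSI.integral_exp_mul_add_const_sub (hint S hS hS0) (hint I hI hI0)]
    · congr 1; ring_nf
    · rw [hg]
      refine (Integrable.sub ?_ ?_).div_const t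
      · exact hint _ (by fun_prop) fun ω => by linarith [hI0 ω]
      · exact hint _ (by fun_prop) fun ω => by linarith [hI0 ω, hS0 ω]
  calc _ = ∫⁻ ω, (∫⁻ t in Ioi 0, ENNReal.ofReal (g t ω)) ∂μ := lintegral_congr hfrullani
    _ = ∫⁻ t in Ioi 0, ∫⁻ ω, ENNReal.ofReal (g t ω) ∂μ := lintegral_lintegral_swap (by fun_prop)
    _ = _ := setLIntegral_congr_fun measurableSet_Ioi hinner

end ProbabilityTheory

theorem stmt_14_general {Ω : Type*} [MeasurableSpace Ω] (μ : Measure Ω) [IsProbabilityMeasure μ]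
    (S I : Ω → ℝ) (σ2 : ℝ) (hσ : 0 < σ2)
    (hSpos : ∀ ω, 0 ≤ S ω) (hIpos : ∀ ω, 0 ≤ I ω)
    (hSmeas : Measurable S) (hImeas : Measurable I)
    (hindep : IndepFun S I μ) :
    (∫ ω, Real.log (1 + S ω / (I ω + σ2)) ∂μ) =
      ∫ t in Set.Ioi (0 : ℝ),
        (∫ ω, Real.exp (-(t * I ω)) ∂μ) * (1 - ∫ ω, Real.exp (-(t * S ω)) ∂μ) / t *
          Real.exp (-(σ2 * t)) := by
  have hlaplace : ∀ (X : Ω → ℝ) t, ∫ ω, exp (-(t * X ω)) ∂μ = mgf X μ (-t) := fun X t => by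
    simp only [mgf, neg_mul]
  simp only [hlaplace]
  have hlhs0 : ∀ ω, 0 ≤ log (1 + S ω / (I ω + σ2)) := fun ω =>
    log_nonneg (le_add_of_nonneg_right (div_nonneg (hSpos ω) (by linarith [hIpos ω])))
  have hrhs0 : ∀ t ∈ Ioi (0 : ℝ),
      0 ≤ mgf I μ (-t) * (1 - mgf S μ (-t)) / t * exp (-(σ2 * t)) := by
    intro t ht
    have hMS_le : mgf S μ (-t) ≤ 1 :=
      mgf_le_one_of_nonpos_of_nonneg (neg_nonpos.2 (le_of_lt ht)) (ae_of_all _ hSpos)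
    have hMI_nonneg : 0 ≤ mgf I μ (-t) := mgf_nonneg
    have ht0 : 0 < t := ht
    positivity
  have hMI := measurable_mgf (μ := μ) hImeas
  have hMS := measurable_mgf (μ := μ) hSmeas
  rw [integral_eq_lintegral_of_nonneg_ae (ae_of_all _ hlhs0)
      (by fun_prop : Measurable fun ω => log (1 + S ω / (I ω + σ2))).aestronglyMeasurable,
    integral_eq_lintegral_of_nonneg_ae ((ae_restrict_iff' measurableSet_Ioi).2 (ae_of_all _ hrhs0))
      (by fun_prop : Measurable fun t =>
        mgf I μ (-t) * (1 - mgf S μ (-t)) / t * exp (-(σ2 * t))).aestronglyMeasurable,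
    lintegral_log_one_add_div_eq_lintegral_mgf hσ hSpos hIpos hSmeas hImeas hindep]

/-- Hamdi's lemma: for independent nonnegative `S` and `I` with Laplace transforms `M_S`, `M_I`
and noise power `σ² > 0`,
`E[ln(1 + S/(I + σ²))] = ∫₀^∞ (M_I(t)(1 − M_S(t))/t) e^{−σ² t} dt`,
provided the expectation is finite. -/
theorem stmt_14 {Ω : Type*} [MeasurableSpace Ω] (μ : Measure Ω) [IsProbabilityMeasure μ]
    (S I : Ω → ℝ) (σ2 : ℝ) (hσ : 0 < σ2)
    (hSpos : ∀ ω, 0 ≤ S ω) (hIpos : ∀ ω, 0 ≤ I ω)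
    (hSmeas : Measurable S) (hImeas : Measurable I)
    (hindep : IndepFun S I μ)
    (hfin : Integrable (fun ω => Real.log (1 + S ω / (I ω + σ2))) μ) :
    (∫ ω, Real.log (1 + S ω / (I ω + σ2)) ∂μ) =
      ∫ t in Set.Ioi (0 : ℝ),
        (∫ ω, Real.exp (-(t * I ω)) ∂μ) * (1 - ∫ ω, Real.exp (-(t * S ω)) ∂μ) / t *
          Real.exp (-(σ2 * t)) :=
  stmt_14_general μ S I σ2 hσ hSpos hIpos hSmeas hImeas hindep
end
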